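/- arXiv:2409.10854 — 6 statements merged into one kernel-verified Lean document; each statement's English description precedes it below -/
import Mathlib

section
/- Suppose d'_min ≥ τ_o + 1 for a nonnegative integer τ_o. Let ρ_o ⊆ {1,…,E} with |ρ_o| ≤ τ_o. If x, x' ∈ F_q^{sk} and z, z' ∈ F_q^E satisfy supp(z) ⊆ ρ_o, supp(z') ⊆ ρ_o, and the vectors xF + zG and x'F + z'G agree in every coordinate j ∈ {1,…,r} with ι(j) ∉ ρ_o, then x(T⊗I_k) = x'(T⊗I_k). (That is, a code of minimum distance at least τ_o + 1 is robust against τ_o link outages whose locations are known to the sink node.) -/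
open Matrix Kronecker

/-- Robustness against known link outages: if the minimum distance
`d'_min = min{|ρ| : ∃ x z, supp(z) ⊆ ρ, x(T⊗I_k) ≠ 0, xF = zG}` is at least
`τ_o + 1`, then whenever the outages are confined to a known set `ρ_o` of at
most `τ_o` links, the received vector (restricted to the coordinates whose
corresponding link is not in `ρ_o`) determines the target value. -/
theorem outage_robustness
    {Fq : Type*} [Field Fq] [Fintype Fq] [DecidableEq Fq]
    {s k l r E : ℕ} (hs : 0 < s) (hk : 0 < k) (hl : 0 < l) (hr : 0 < r) (hE : 0 < E)
    (F : Matrix (Fin s × Fin k) (Fin r) Fq)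
    (G : Matrix (Fin E) (Fin r) Fq)
    (T : Matrix (Fin s) (Fin l) Fq)
    (ι : Fin r → Fin E) (hι : Function.Injective ι)
    (hG : ∀ j : Fin r, G (ι j) = Pi.single j 1)
    (τo : ℕ)
    (hdmin : ∀ ρ : Finset (Fin E),
      (∃ (x : Fin s × Fin k → Fq) (z : Fin E → Fq),
        (∀ e ∉ ρ, z e = 0) ∧
        x ᵥ* (T ⊗ₖ (1 : Matrix (Fin k) (Fin k) Fq)) ≠ 0 ∧
        x ᵥ* F = z ᵥ* G) →
      τo + 1 ≤ ρ.card) :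
    ∀ ρo : Finset (Fin E), ρo.card ≤ τo →
      ∀ (x x' : Fin s × Fin k → Fq) (z z' : Fin E → Fq),
        (∀ e ∉ ρo, z e = 0) → (∀ e ∉ ρo, z' e = 0) →
        (∀ j : Fin r, ι j ∉ ρo →
          (x ᵥ* F + z ᵥ* G) j = (x' ᵥ* F + z' ᵥ* G) j) →
        x ᵥ* (T ⊗ₖ (1 : Matrix (Fin k) (Fin k) Fq)) =
          x' ᵥ* (T ⊗ₖ (1 : Matrix (Fin k) (Fin k) Fq)) := by
  intro ρo hcard x x' z z' hz hz' hagree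
  by_contra hne
  set v : Fin r → Fq :=
    fun j => (x ᵥ* F + z ᵥ* G) j - (x' ᵥ* F + z' ᵥ* G) j with hv_def
  have hv : ∀ j, ι j ∉ ρo → v j = 0 := fun j hj => sub_eq_zero.mpr (hagree j hj)
  set zt : Fin E → Fq :=
    fun e => (z' e - z e) + ∑ j, if ι j = e then v j else 0 with hzt_def
  have hsupp : ∀ e ∉ ρo, zt e = 0 := by
    intro e he
    have h1 : z' e - z e = 0 := by rw [hz e he, hz' e he]; ring
    have h2 : (∑ j, if ι j = e then v j else 0) = 0 := by
      apply Finset.sum_eq_zero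
      intro j _
      by_cases hje : ι j = e
      · simp [hje, hv j (hje ▸ he)]
      · simp [hje]
    simp [hzt_def, h1, h2]
  have htgt : (x - x') ᵥ* (T ⊗ₖ (1 : Matrix (Fin k) (Fin k) Fq)) ≠ 0 := by
    rw [Matrix.sub_vecMul]
    intro h
    exact hne (sub_eq_zero.mp h)
  have heq : (x - x') ᵥ* F = zt ᵥ* G := by
    funext j'
    have key : (∑ e, (∑ j, if ι j = e then v j else 0) * G e j') = v j' := by
      have : ∀ e, (∑ j, if ι j = e then v j else 0) * G e j'
          = ∑ j, if ι j = e then v j * G e j' else 0 := by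
        intro e
        rw [Finset.sum_mul]
        congr 1
        funext j
        split <;> simp
      simp_rw [this]
      rw [Finset.sum_comm]
      have : ∀ j : Fin r, (∑ e, if ι j = e then v j * G e j' else 0)
          = v j * (Pi.single j 1 : Fin r → Fq) j' := by
        intro j
        rw [Finset.sum_ite_eq Finset.univ (ι j) (fun e => v j * G e j')]
        simp [hG j]
      simp_rw [this]
      rw [Finset.sum_eq_single j']
      · simp
      · intro b _ hb
        simp [Pi.single_apply, hb.symm]
      · simp
    have hvec : ∀ (w : Fin E → Fq), (w ᵥ* G) j' = ∑ e, w e * G e j' := by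
      intro w; rfl
    have hzt : (zt ᵥ* G) j' = ∑ e, ((z' e - z e) + ∑ j, if ι j = e then v j else 0) * G e j' := rfl
    rw [hzt]
    simp_rw [add_mul, sub_mul]
    rw [Finset.sum_add_distrib, Finset.sum_sub_distrib, key]
    have hF : ((x - x') ᵥ* F) j' = (x ᵥ* F) j' - (x' ᵥ* F) j' := by
      rw [Matrix.sub_vecMul]; rfl
    rw [hF, hv_def]
    have h1 : (∑ e, z' e * G e j') = (z' ᵥ* G) j' := rfl
    have h2 : (∑ e, z e * G e j') = (z ᵥ* G) j' := rfl
    rw [h1, h2]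
    simp [Pi.add_apply]
    ring
  have := hdmin ρo ⟨x - x', zt, hsupp, htgt, heq⟩
  omega
end

section
/- Let F be a finite field with q elements, let h, k be integers with 0 ≤ k ≤ h, and let U be a subspace of F^h with dim U = h − k. Then the number of k-dimensional subspaces W of F^h satisfying W ∩ U = {0} is exactly q^{k(h−k)}. -/
/-- In `F^h` over a finite field `F` with `q` elements, given a subspace `U` of
dimension `h - k`, the number of `k`-dimensional subspaces `W` with
`W ∩ U = {0}` is exactly `q^(k(h-k))`. -/
theorem card_complementary_subspaces
    (F : Type*) [Field F] [Fintype F] (h k : ℕ) (hkh : k ≤ h)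
    (U : Submodule F (Fin h → F)) (hU : Module.finrank F U = h - k) :
    Nat.card {W : Submodule F (Fin h → F) // Module.finrank F W = k ∧ W ⊓ U = ⊥} =
      (Fintype.card F) ^ (k * (h - k)) := by
  classical
  have hE : Module.finrank F (Fin h → F) = h := Module.finrank_fin_fun F
  -- Step 1: the condition is equivalent to `IsCompl U W`.
  have e1 : {W : Submodule F (Fin h → F) // Module.finrank F W = k ∧ W ⊓ U = ⊥} ≃
      {W : Submodule F (Fin h → F) // IsCompl U W} := by
    refine Equiv.subtypeEquiv (Equiv.refl _) fun W => ?_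
    simp only [Equiv.refl_apply]
    constructor
    · rintro ⟨hk, hbot⟩
      refine ⟨disjoint_iff.mpr (by rwa [inf_comm] at hbot), codisjoint_iff.mpr ?_⟩
      apply Submodule.eq_top_of_finrank_eq
      have h1 := Submodule.finrank_sup_add_finrank_inf_eq U W
      rw [inf_comm] at hbot
      rw [hbot, finrank_bot, add_zero, hU, hk] at h1
      rw [hE]
      omega
    · intro hc
      have h1 := Submodule.finrank_add_eq_of_isCompl hc
      rw [hU, hE] at h1
      exact ⟨by omega, disjoint_iff.mp hc.disjoint.symm⟩
  -- Step 2: complements correspond to projections.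
  have e2 := U.isComplEquivProj
  -- Step 3: projections correspond to linear maps `(Fin h → F) ⧸ U →ₗ[F] U`.
  obtain ⟨W0, hW0⟩ := Submodule.exists_isCompl U
  set f0 : (Fin h → F) →ₗ[F] U := U.linearProjOfIsCompl W0 hW0 with hf0def
  have hf0 : ∀ x : U, f0 x = x := fun x => Submodule.linearProjOfIsCompl_apply_left hW0 x
  have e3 : {f : (Fin h → F) →ₗ[F] U // ∀ x : U, f x = x} ≃
      (((Fin h → F) ⧸ U) →ₗ[F] U) := by
    refine
      { toFun := fun f => U.liftQ (f.1 - f0) ?_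
        invFun := fun g => ⟨f0 + g ∘ₗ U.mkQ, ?_⟩
        left_inv := ?_
        right_inv := ?_ }
    · intro x hx
      simp only [LinearMap.mem_ker, LinearMap.sub_apply]
      rw [show (x : Fin h → F) = ((⟨x, hx⟩ : U) : Fin h → F) from rfl, f.2 ⟨x, hx⟩,
        hf0 ⟨x, hx⟩, sub_self]
    · intro x
      simp only [LinearMap.add_apply, LinearMap.coe_comp, Function.comp_apply,
        Submodule.mkQ_apply]
      rw [(Submodule.Quotient.mk_eq_zero U).mpr x.2, map_zero, add_zero, hf0]
    · rintro ⟨f, hf⟩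
      refine Subtype.ext (LinearMap.ext fun x => ?_)
      simp only [LinearMap.add_apply, LinearMap.coe_comp, Function.comp_apply,
        Submodule.mkQ_apply, Submodule.liftQ_apply, LinearMap.sub_apply]
      abel
    · intro g
      refine Submodule.linearMap_qext U (LinearMap.ext fun x => ?_)
      simp only [LinearMap.coe_comp, Function.comp_apply, Submodule.mkQ_apply,
        Submodule.liftQ_apply, LinearMap.add_apply, LinearMap.sub_apply]
      abel
  have e := (e1.trans e2).trans e3
  rw [Nat.card_congr e]
  haveI : Finite (((Fin h → F) ⧸ U) →ₗ[F] U) :=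
    Finite.of_injective (fun f => (f : ((Fin h → F) ⧸ U) → U)) DFunLike.coe_injective
  haveI := Fintype.ofFinite (((Fin h → F) ⧸ U) →ₗ[F] U)
  have hQ : Module.finrank F ((Fin h → F) ⧸ U) = k := by
    have h2 := Submodule.finrank_quotient_add_finrank U
    rw [hU, hE] at h2
    omega
  rw [Nat.card_eq_fintype_card, Module.card_eq_pow_finrank (K := F), Module.finrank_linearMap, hQ, hU]
end

section
/- Fix positive integers h, k, E with k < h and h − k ≤ E. There exists Q such that for every finite field F with |F| ≥ Q and every family of vectors g_1, …, g_E ∈ F^h, there exists a k-dimensional subspace W of F^h such that W ∩ span{g_i : i ∈ S} = {0} for every subset S ⊆ {1,…,E} with |S| ≤ h − k. -/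
open Module

/-- Over a finite field, `F^n` is not covered by fewer than `|F|` proper subspaces. -/
lemma exists_not_mem_of_card_lt {F : Type} [Field F] [Fintype F] {n : ℕ} (hn : 0 < n)
    {ι : Type} (T : Finset ι) (p : ι → Submodule F (Fin n → F))
    (hp : ∀ i ∈ T, p i ≠ ⊤) (hcard : T.card < Fintype.card F) :
    ∃ v : Fin n → F, ∀ i ∈ T, v ∉ p i := by
  classical
  by_contra hcon
  push_neg at hcon
  have hq1 : 1 ≤ Fintype.card F := Fintype.card_pos
  have key : Fintype.card (Fin n → F) ≤ T.card * Fintype.card F ^ (n - 1) := by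
    have hsub : (Finset.univ : Finset (Fin n → F)) ⊆
        T.biUnion (fun i => (p i : Set (Fin n → F)).toFinset) := by
      intro v _
      obtain ⟨i, hi, hv⟩ := hcon v
      exact Finset.mem_biUnion.2 ⟨i, hi, Set.mem_toFinset.2 hv⟩
    calc Fintype.card (Fin n → F) = (Finset.univ : Finset (Fin n → F)).card :=
          Finset.card_univ.symm
      _ ≤ _ := Finset.card_le_card hsub
      _ ≤ ∑ i ∈ T, ((p i : Set (Fin n → F)).toFinset).card := Finset.card_biUnion_le
      _ ≤ ∑ _i ∈ T, Fintype.card F ^ (n - 1) := by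
          apply Finset.sum_le_sum
          intro i hi
          rw [Set.toFinset_card]
          have hcardp : Fintype.card ((p i : Set (Fin n → F))) =
              Fintype.card F ^ finrank F (p i) := card_eq_pow_finrank
          rw [hcardp]
          apply Nat.pow_le_pow_right hq1
          have hlt : finrank F (p i) < finrank F (Fin n → F) :=
            Submodule.finrank_lt (hp i hi)
          rw [Module.finrank_fin_fun] at hlt
          omega
      _ = T.card * Fintype.card F ^ (n - 1) := by
          rw [Finset.sum_const, smul_eq_mul]
  have hbig : Fintype.card (Fin n → F) = Fintype.card F ^ n := by
    simp [Fintype.card_fun]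
  rw [hbig] at key
  have : Fintype.card F ^ n = Fintype.card F * Fintype.card F ^ (n - 1) := by
    conv_lhs => rw [show n = 1 + (n - 1) by omega]
    rw [pow_add, pow_one]
  rw [this] at key
  have hpos : 0 < Fintype.card F ^ (n - 1) := Nat.pow_pos hq1
  have := (Nat.mul_lt_mul_right hpos).2 hcard
  omega

/-- For fixed positive integers `h, k, E` with `k < h` and `h - k ≤ E`, over
every sufficiently large finite field `F` and for every family of vectors
`g_1, …, g_E ∈ F^h`, there is a `k`-dimensional subspace `W` of `F^h`
intersecting trivially the span of every at most `h - k` of the `g_i`. -/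
theorem exists_subspace_avoiding_spans
    (h k E : ℕ) (hh : 0 < h) (hk : 0 < k) (hE : 0 < E) (hkh : k < h) (hhE : h - k ≤ E) :
    ∃ Q : ℕ, ∀ (F : Type) [Field F] [Fintype F], Q ≤ Fintype.card F →
      ∀ g : Fin E → (Fin h → F),
        ∃ W : Submodule F (Fin h → F), Module.finrank F W = k ∧
          ∀ S : Finset (Fin E), S.card ≤ h - k →
            W ⊓ Submodule.span F (g '' ↑S) = ⊥ := by
  classical
  refine ⟨2 ^ E + 1, ?_⟩
  intro F _ _ hQ g
  -- Build subspaces of each dimension `j ≤ k` inductively.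
  suffices H : ∀ j, j ≤ k → ∃ W : Submodule F (Fin h → F), Module.finrank F W = j ∧
      ∀ S : Finset (Fin E), S.card ≤ h - k →
        W ⊓ Submodule.span F (g '' ↑S) = ⊥ by
    obtain ⟨W, hW1, hW2⟩ := H k le_rfl
    exact ⟨W, hW1, hW2⟩
  intro j
  induction j with
  | zero =>
    intro _
    refine ⟨⊥, finrank_bot F _, fun S _ => by simp⟩
  | succ j ih =>
    intro hj
    obtain ⟨W, hWrank, hWint⟩ := ih (by omega)
    -- the bad subspaces
    set T : Finset (Finset (Fin E)) := Finset.univ.filter (fun S => S.card ≤ h - k) with hT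
    set p : Finset (Fin E) → Submodule F (Fin h → F) :=
      fun S => Submodule.span F (g '' ↑S) ⊔ W with hp
    have hspanrank : ∀ S : Finset (Fin E), S.card ≤ h - k →
        finrank F (Submodule.span F (g '' ↑S)) ≤ h - k := by
      intro S hS
      have : g '' ↑S = ↑(S.image g) := by simp [Finset.coe_image]
      rw [this]
      exact le_trans (finrank_span_finset_le_card (S.image g)) (le_trans
        (Finset.card_image_le) hS)
    have hpne : ∀ S ∈ T, p S ≠ ⊤ := by
      intro S hS
      have hScard : S.card ≤ h - k := (Finset.mem_filter.1 hS).2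
      intro htop
      have hle : finrank F (p S) ≤ (h - k) + j := by
        calc finrank F (p S) ≤ finrank F (Submodule.span F (g '' ↑S)) + finrank F W :=
              Submodule.finrank_add_le_finrank_add_finrank _ _
          _ ≤ (h - k) + j := by
              have := hspanrank S hScard
              omega
      rw [htop, finrank_top, Module.finrank_fin_fun] at hle
      omega
    have hTcard : T.card < Fintype.card F := by
      have : T.card ≤ 2 ^ E := by
        calc T.card ≤ (Finset.univ : Finset (Finset (Fin E))).card :=
              Finset.card_le_card (Finset.filter_subset _ _)
          _ = 2 ^ E := by simp
      omega
    obtain ⟨v, hv⟩ := exists_not_mem_of_card_lt hh T p hpne hTcard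
    have hvT : ∀ S : Finset (Fin E), S.card ≤ h - k → v ∉ p S := by
      intro S hS
      exact hv S (Finset.mem_filter.2 ⟨Finset.mem_univ _, hS⟩)
    have hvW : v ∉ W := by
      intro hvw
      apply hvT ∅ (by simp)
      exact Submodule.mem_sup_right hvw
    refine ⟨W ⊔ Submodule.span F {v}, ?_, ?_⟩
    · -- rank computation
      have hinf : W ⊓ Submodule.span F {v} = ⊥ := by
        rw [eq_bot_iff]
        intro x hx
        obtain ⟨hxW, hxv⟩ := Submodule.mem_inf.1 hx
        obtain ⟨a, rfl⟩ := Submodule.mem_span_singleton.1 hxv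
        rcases eq_or_ne a 0 with rfl | ha
        · simp
        · exfalso
          apply hvW
          have : a⁻¹ • (a • v) ∈ W := Submodule.smul_mem _ _ hxW
          rwa [smul_smul, inv_mul_cancel₀ ha, one_smul] at this
      have := Submodule.finrank_sup_add_finrank_inf_eq W (Submodule.span F {v})
      rw [hinf, finrank_bot, hWrank, finrank_span_singleton (by
        intro hv0; apply hvW; rw [hv0]; exact Submodule.zero_mem W)] at this
      omega
    · intro S hS
      rw [eq_bot_iff]
      intro x hx
      obtain ⟨hx1, hx2⟩ := Submodule.mem_inf.1 hx
      rw [Submodule.mem_sup] at hx1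
      obtain ⟨w, hw, z, hz, rfl⟩ := hx1
      obtain ⟨a, rfl⟩ := Submodule.mem_span_singleton.1 hz
      rcases eq_or_ne a 0 with rfl | ha
      · rw [zero_smul, add_zero] at hx2 ⊢
        have : w ∈ W ⊓ Submodule.span F (g '' ↑S) := ⟨hw, hx2⟩
        rw [hWint S hS] at this
        exact this
      · exfalso
        apply hvT S hS
        have hmem : a • v ∈ p S := by
          have h1 : (w + a • v) - w ∈ p S := by
            apply Submodule.sub_mem
            · exact Submodule.mem_sup_left hx2
            · exact Submodule.mem_sup_right hw
          simpa using h1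
        have : a⁻¹ • (a • v) ∈ p S := Submodule.smul_mem _ _ hmem
        rwa [smul_smul, inv_mul_cancel₀ ha, one_smul] at this
end

section
/- Fix positive integers h, k, E with k < h and h − k ≤ E. There exists Q such that for every finite field F_q with q ≥ Q and every matrix G ∈ F_q^{E×h}, there exists a matrix D ∈ F_q^{k×h} of rank k which contains the k×k identity matrix as a column submatrix (i.e., there are k column indices on which D restricts to I_k), such that no nonzero vector v in the row space of D can be written as v = zG for any z ∈ F_q^E with wt_H(z) ≤ h − k. -/
open Matrix



/-- Row space of `M * B` is contained in the row space of `B`. -/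
lemma span_row_mul_le' {K : Type*} [Field K] {m n p : Type*} [Fintype m] [Fintype n] [Fintype p]
    (M : Matrix m n K) (B : Matrix n p K) :
    Submodule.span K (Set.range fun i => (M * B) i) ≤
      Submodule.span K (Set.range fun i => B i) := by
  rw [Submodule.span_le]
  rintro _ ⟨i, rfl⟩
  have hrow : (M * B) i = ∑ l, M i l • B l := by
    ext j
    simp [Matrix.mul_apply, Finset.sum_apply]
  show (M * B) i ∈ _
  rw [hrow]
  exact Submodule.sum_mem _ fun l _ =>
    Submodule.smul_mem _ _ (Submodule.subset_span ⟨l, rfl⟩)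

/-- Over a big enough finite field, finitely many subspaces of dimension `≤ h - 1`
cannot cover the whole space. -/
lemma exists_not_mem_subspaces {K : Type*} [Field K] [Fintype K] {h : ℕ} (hh : 0 < h)
    {ι : Type*} [Fintype ι] (U : ι → Submodule K (Fin h → K))
    (hd : ∀ f, Module.finrank K (U f) ≤ h - 1)
    (hcard : Fintype.card ι < Fintype.card K) :
    ∃ x : Fin h → K, ∀ f, x ∉ U f := by
  classical
  by_contra hcon
  push_neg at hcon
  set q := Fintype.card K with hq
  have hq0 : 0 < q := Fintype.card_pos
  have hsub : (Finset.univ : Finset (Fin h → K)) ⊆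
      Finset.univ.biUnion (fun f => (U f : Set (Fin h → K)).toFinset) := by
    intro x _
    obtain ⟨f, hf⟩ := hcon x
    exact Finset.mem_biUnion.mpr ⟨f, Finset.mem_univ f, Set.mem_toFinset.mpr hf⟩
  have h1 : q ^ h ≤ ∑ f : ι, ((U f : Set (Fin h → K)).toFinset.card) := by
    calc q ^ h = Fintype.card (Fin h → K) := by
          rw [Fintype.card_fun, Fintype.card_fin]
      _ = (Finset.univ : Finset (Fin h → K)).card := (Finset.card_univ).symm
      _ ≤ (Finset.univ.biUnion (fun f => (U f : Set (Fin h → K)).toFinset)).card :=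
          Finset.card_le_card hsub
      _ ≤ ∑ f : ι, ((U f : Set (Fin h → K)).toFinset.card) := Finset.card_biUnion_le
  have h2 : ∀ f : ι, ((U f : Set (Fin h → K)).toFinset.card) ≤ q ^ (h - 1) := by
    intro f
    have : ((U f : Set (Fin h → K)).toFinset.card) = Fintype.card (U f) := by
      rw [Set.toFinset_card]
      rfl
    rw [this, Module.card_eq_pow_finrank (K := K) (V := U f)]
    exact Nat.pow_le_pow_right hq0 (hd f)
  have h3 : ∑ f : ι, ((U f : Set (Fin h → K)).toFinset.card) ≤ Fintype.card ι * q ^ (h - 1) := by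
    calc ∑ f : ι, ((U f : Set (Fin h → K)).toFinset.card)
        ≤ ∑ _f : ι, q ^ (h - 1) := Finset.sum_le_sum fun f _ => h2 f
      _ = Fintype.card ι * q ^ (h - 1) := by rw [Finset.sum_const, Finset.card_univ, smul_eq_mul]
  have h4 : Fintype.card ι * q ^ (h - 1) < q * q ^ (h - 1) :=
    (Nat.mul_lt_mul_right (Nat.pow_pos hq0)).mpr hcard
  have h5 : q * q ^ (h - 1) = q ^ h := by
    rw [← pow_succ']
    congr 1
    omega
  omega

/-- Greedy construction of a linearly independent family whose span avoids
finitely many small subspaces. -/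
lemma greedy_avoid {K : Type*} [Field K] [Fintype K] {h k : ℕ} (hk : 0 < k) (hkh : k < h)
    {ι : Type*} [Fintype ι] [Nonempty ι]
    (V : ι → Submodule K (Fin h → K)) (hV : ∀ f, Module.finrank K (V f) ≤ h - k)
    (hcard : Fintype.card ι < Fintype.card K) :
    ∀ n, n ≤ k → ∃ w : Fin n → (Fin h → K), LinearIndependent K w ∧
      ∀ f, Submodule.span K (Set.range w) ⊓ V f = ⊥ := by
  intro n
  induction n with
  | zero =>
    intro _
    refine ⟨fun i => 0, linearIndependent_empty_type, fun f => ?_⟩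
    rw [Set.range_eq_empty, Submodule.span_empty, bot_inf_eq]
  | succ n ih =>
    intro hn1
    obtain ⟨w, hw, hinf⟩ := ih (by omega)
    set W := Submodule.span K (Set.range w) with hW
    have hWfr : Module.finrank K W ≤ n := by
      have h0 := finrank_range_le_card (R := K) w
      rw [Set.finrank, Fintype.card_fin] at h0
      exact h0
    set U : ι → Submodule K (Fin h → K) := fun f => V f ⊔ W with hU
    have hUfr : ∀ f, Module.finrank K (U f) ≤ h - 1 := by
      intro f
      have h1 : Module.finrank K (U f) ≤ Module.finrank K (V f) + Module.finrank K W :=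
        Submodule.finrank_add_le_finrank_add_finrank (V f) W
      have := hV f
      omega
    obtain ⟨x, hx⟩ := exists_not_mem_subspaces (by omega : 0 < h) U hUfr hcard
    have hxW : x ∉ W := fun hxw => hx (Classical.arbitrary ι) (le_sup_right (a := V _) hxw)
    refine ⟨Fin.cons x w, linearIndependent_fin_cons.mpr ⟨hw, hxW⟩, fun f => ?_⟩
    rw [eq_bot_iff]
    intro v hv
    rw [Submodule.mem_inf] at hv
    obtain ⟨hv1, hv2⟩ := hv
    rw [Fin.range_cons, Submodule.mem_span_insert] at hv1
    obtain ⟨a, p, hp, rfl⟩ := hv1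
    by_cases ha : a = 0
    · subst ha
      rw [zero_smul, zero_add] at hv2 ⊢
      have : p ∈ W ⊓ V f := Submodule.mem_inf.mpr ⟨hp, hv2⟩
      rw [hinf f] at this
      exact this
    · exfalso
      apply hx f
      have hvU : a • x + p ∈ U f := le_sup_left (b := W) hv2
      have hpU : p ∈ U f := le_sup_right (a := V f) hp
      have : a • x = (a • x + p) - p := by ring
      have hxU : a • x ∈ U f := by rw [this]; exact Submodule.sub_mem _ hvU hpU
      have := Submodule.smul_mem (U f) a⁻¹ hxU
      rwa [smul_smul, inv_mul_cancel₀ ha, one_smul] at this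


/-- Source-coding step for the sum function: for fixed positive integers
`h, k, E` with `k < h` and `h - k ≤ E`, over every sufficiently large finite
field and for every matrix `G ∈ F_q^{E×h}`, there is a rank-`k` matrix
`D ∈ F_q^{k×h}` containing `I_k` as a column submatrix such that no nonzero
vector of the row space of `D` equals `zG` for any `z` of Hamming weight at
most `h - k`. -/
theorem exists_source_encoding_matrix
    (h k E : ℕ) (hh : 0 < h) (hk : 0 < k) (hE : 0 < E) (hkh : k < h) (hhE : h - k ≤ E) :
    ∃ Q : ℕ, ∀ (Fq : Type) [Field Fq] [Fintype Fq] [DecidableEq Fq],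
      Q ≤ Fintype.card Fq →
      ∀ G : Matrix (Fin E) (Fin h) Fq,
        ∃ D : Matrix (Fin k) (Fin h) Fq,
          D.rank = k ∧
          (∃ c : Fin k → Fin h, Function.Injective c ∧
            D.submatrix id c = (1 : Matrix (Fin k) (Fin k) Fq)) ∧
          ∀ v ∈ Submodule.span Fq (Set.range fun i => D i), v ≠ 0 →
            ∀ z : Fin E → Fq, hammingNorm z ≤ h - k → v ≠ z ᵥ* G := by
  classical
  refine ⟨E ^ (h - k) + 1, ?_⟩
  intro Fq _ _ _ hq G
  haveI : Nonempty (Fin E) := ⟨⟨0, hE⟩⟩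
  -- the index type of supports
  set ι := (Fin (h - k) → Fin E) with hι
  have hcardι : Fintype.card ι < Fintype.card Fq := by
    have : Fintype.card ι = E ^ (h - k) := by
      show Fintype.card (Fin (h - k) → Fin E) = _
      rw [Fintype.card_fun, Fintype.card_fin, Fintype.card_fin]
    omega
  set V : ι → Submodule Fq (Fin h → Fq) :=
    fun f => Submodule.span Fq (Set.range fun j => G (f j)) with hV
  have hVfr : ∀ f, Module.finrank Fq (V f) ≤ h - k := by
    intro f
    have h0 := finrank_range_le_card (R := Fq) (fun j => G (f j))
    rw [Set.finrank, Fintype.card_fin] at h0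
    exact h0
  obtain ⟨w, hw, hinf⟩ := greedy_avoid hk hkh V hVfr hcardι k le_rfl
  -- the matrix with rows w
  set B : Matrix (Fin k) (Fin h) Fq := Matrix.of w with hB
  have hrankB : B.rank = k := by
    have : LinearIndependent Fq (fun i => B i) := hw
    rw [this.rank_matrix, Fintype.card_fin]
  -- columns of B span everything
  have hspancols : Submodule.span Fq (Set.range Bᵀ) = ⊤ := by
    apply Submodule.eq_top_of_finrank_eq
    change Module.finrank Fq (Submodule.span Fq (Set.range B.col)) = Module.finrank Fq (Fin k → Fq)
    rw [← Matrix.rank_eq_finrank_span_cols, hrankB, Module.finrank_fin_fun]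
  -- extract a basis from the columns
  obtain ⟨b, hbt, hbspan, hbli⟩ := exists_linearIndependent Fq (Set.range Bᵀ)
  rw [hspancols] at hbspan
  haveI : Fintype b := Fintype.ofFinite b
  have hbbasis : Module.Basis b Fq (Fin k → Fq) :=
    Module.Basis.mk hbli (by rw [Subtype.range_coe, hbspan])
  have hcardb : Fintype.card b = k := by
    rw [← Module.finrank_eq_card_basis hbbasis, Module.finrank_fin_fun]
  have e : Fin k ≃ b := (Fintype.equivFinOfCardEq hcardb).symm
  have hc : ∀ i : Fin k, ∃ j : Fin h, Bᵀ j = (e i : Fin k → Fq) := fun i => hbt (e i).2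
  set c : Fin k → Fin h := fun i => (hc i).choose with hcdef
  have hcspec : ∀ i, Bᵀ (c i) = (e i : Fin k → Fq) := fun i => (hc i).choose_spec
  have hcinj : Function.Injective c := by
    intro i i' hii
    have : Bᵀ (c i) = Bᵀ (c i') := by rw [hii]
    rw [hcspec, hcspec] at this
    exact e.injective (Subtype.ext this)
  set N : Matrix (Fin k) (Fin k) Fq := B.submatrix id c with hN
  have hNT : Nᵀ = fun j => (e j : Fin k → Fq) := by
    funext j i
    exact congrFun (hcspec j) i
  have hNunit : IsUnit N := by
    rw [← Matrix.linearIndependent_cols_iff_isUnit]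
    change LinearIndependent Fq (Nᵀ : Fin k → Fin k → Fq)
    rw [hNT]
    exact hbli.comp e e.injective
  have hNdet : IsUnit N.det := (Matrix.isUnit_iff_isUnit_det N).mp hNunit
  set D : Matrix (Fin k) (Fin h) Fq := N⁻¹ * B with hD
  -- row space of D equals row space of B
  have hNB : N * D = B := by
    rw [hD, ← Matrix.mul_assoc, Matrix.mul_nonsing_inv _ hNdet, Matrix.one_mul]
  have hspanD : Submodule.span Fq (Set.range fun i => D i)
      = Submodule.span Fq (Set.range w) := by
    apply le_antisymm
    · exact span_row_mul_le' N⁻¹ B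
    · have := span_row_mul_le' N D
      rwa [hNB] at this
  refine ⟨D, ?_, ⟨c, hcinj, ?_⟩, ?_⟩
  · rw [Matrix.rank_eq_finrank_span_row]
    have : (Set.range D.row) = (Set.range fun i => D i) := rfl
    rw [this, hspanD, finrank_span_eq_card hw, Fintype.card_fin]
  · have h1 : D.submatrix id c = N⁻¹ * N := by
      ext i j
      simp only [Matrix.submatrix_apply, Matrix.mul_apply, hD, hN, id_eq]
    rw [h1, Matrix.nonsing_inv_mul _ hNdet]
  · rintro v hv hv0 z hz rfl
    -- find a support-covering function f
    set s : Finset (Fin E) := {i | z i ≠ 0} with hs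
    have hscard : s.card ≤ h - k := hz
    set f : ι := fun j => if hj : (j : ℕ) < s.card then (s.equivFin.symm ⟨j, hj⟩ : Fin E)
      else ⟨0, hE⟩ with hf
    have hmem : z ᵥ* G ∈ V f := by
      have hzg : z ᵥ* G = ∑ i ∈ s, z i • G i := by
        rw [show z ᵥ* G = ∑ i, z i • G i by
          ext j; simp [Matrix.vecMul, dotProduct, Finset.sum_apply]]
        refine (Finset.sum_subset (Finset.subset_univ s) ?_).symm
        intro i _ hi
        have : z i = 0 := by
          by_contra hzi
          exact hi (by simp [hs, hzi])
        rw [this, zero_smul]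
      rw [hzg]
      refine Submodule.sum_mem _ fun i hi => Submodule.smul_mem _ _ ?_
      apply Submodule.subset_span
      set j0 : Fin s.card := s.equivFin ⟨i, hi⟩ with hj0
      have hj0lt : (j0 : ℕ) < h - k := lt_of_lt_of_le j0.2 hscard
      refine ⟨⟨(j0 : ℕ), hj0lt⟩, ?_⟩
      have hcond : ((⟨(j0 : ℕ), hj0lt⟩ : Fin (h - k)) : ℕ) < s.card := j0.2
      rw [hf]
      simp only [hcond, dif_pos]
      have : s.equivFin.symm ⟨(j0 : ℕ), hcond⟩ = ⟨i, hi⟩ := by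
        rw [show (⟨(j0 : ℕ), hcond⟩ : Fin s.card) = j0 from rfl, hj0, Equiv.symm_apply_apply]
      rw [this]
    have : z ᵥ* G ∈ Submodule.span Fq (Set.range w) ⊓ V f :=
      Submodule.mem_inf.mpr ⟨by rwa [hspanD] at hv, hmem⟩
    rw [hinf f] at this
    exact hv0 this
end

section
/- Let τ_s, m, n, K be positive integers, and let Z_1, …, Z_n ⊆ {1,…,K} be a data assignment such that every index j ∈ {1,…,K} belongs to Z_i for at least τ_s + m values of i. Then for every sufficiently large finite field F_q there exists a matrix F ∈ F_q^{(Km)×n}, with rows indexed by pairs (j,ℓ) ∈ {1,…,K}×{1,…,m}, satisfying: (a) F_{(j,ℓ),i} = 0 whenever j ∉ Z_i (each worker's encoding uses only its assigned data subsets); and (b) for every subset S ⊆ {1,…,n} with |S| = n − τ_s there exists a matrix U ∈ F_q^{n×m} whose rows indexed outside S are zero such that F·U = 1_K ⊗ I_m. Consequently, for every g ∈ F_q^{Km} the block-sum Σ_{j=1}^K g_j ∈ F_q^m can be computed linearly from the coordinates of gF indexed by S, i.e., the scheme has communication reduction factor m and straggler tolerance τ_s. -/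
open Matrix Polynomial

/-- Key coefficient computation: multiplying a polynomial `v` with nonzero constant
coefficient by the truncation to degree `< m` of `X ^ ℓ * v⁻¹` (inverse as a power
series) yields a polynomial whose coefficients below `m` agree with those of `X ^ ℓ`. -/
lemma coeff_mul_trunc_inv {Fq : Type} [Field Fq] (v : Fq[X]) (hv : v.coeff 0 ≠ 0)
    (m ℓ ℓ' : ℕ) (hℓ' : ℓ' < m) :
    (v * PowerSeries.trunc m ((PowerSeries.X : PowerSeries Fq) ^ ℓ *
        (↑v : PowerSeries Fq)⁻¹)).coeff ℓ' = if ℓ = ℓ' then 1 else 0 := by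
  have hconst : PowerSeries.constantCoeff (↑v : PowerSeries Fq) ≠ 0 := by
    rwa [Polynomial.constantCoeff_coe]
  have hinv : (↑v : PowerSeries Fq) * (↑v : PowerSeries Fq)⁻¹ = 1 :=
    PowerSeries.mul_inv_cancel _ hconst
  have key : (↑v : PowerSeries Fq) * ((PowerSeries.X : PowerSeries Fq) ^ ℓ *
      (↑v : PowerSeries Fq)⁻¹) = (PowerSeries.X : PowerSeries Fq) ^ ℓ := by
    rw [mul_comm ((PowerSeries.X : PowerSeries Fq) ^ ℓ), ← mul_assoc, hinv, one_mul]
  have h1 : (v * PowerSeries.trunc m ((PowerSeries.X : PowerSeries Fq) ^ ℓ *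
      (↑v : PowerSeries Fq)⁻¹)).coeff ℓ'
      = PowerSeries.coeff ℓ' ((↑v : PowerSeries Fq) *
        ((PowerSeries.X : PowerSeries Fq) ^ ℓ * (↑v : PowerSeries Fq)⁻¹)) := by
    rw [Polynomial.coeff_mul, PowerSeries.coeff_mul]
    refine Finset.sum_congr rfl fun p hp => ?_
    rw [Finset.HasAntidiagonal.mem_antidiagonal] at hp
    rw [PowerSeries.coeff_trunc, Polynomial.coeff_coe, if_pos (by omega)]
  rw [h1, key, PowerSeries.coeff_X_pow]
  exact if_congr eq_comm rfl rfl

/-- Gradient coding from network coding: if every data subset is assigned to at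
least `τ_s + m` worker nodes, then over every sufficiently large finite field
there is an encoding matrix `F` respecting the data assignment such that from
any `n - τ_s` workers' coded messages the master can linearly recover the sum
of all partial gradients (communication reduction factor `m`, straggler
tolerance `τ_s`). -/
theorem gradient_coding_scheme_exists
    (τs m n K : ℕ) (hτs : 0 < τs) (hm : 0 < m) (hn : 0 < n) (hK : 0 < K)
    (Z : Fin n → Finset (Fin K))
    (hZ : ∀ j : Fin K, τs + m ≤ (Finset.univ.filter fun i => j ∈ Z i).card) :
    ∃ Q : ℕ, ∀ (Fq : Type) [Field Fq] [Fintype Fq], Q ≤ Fintype.card Fq →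
      ∃ F : Matrix (Fin K × Fin m) (Fin n) Fq,
        (∀ (j : Fin K) (ℓ : Fin m) (i : Fin n), j ∉ Z i → F (j, ℓ) i = 0) ∧
        ∀ S : Finset (Fin n), S.card = n - τs →
          ∃ U : Matrix (Fin n) (Fin m) Fq,
            (∀ i ∉ S, ∀ ℓ : Fin m, U i ℓ = 0) ∧
            F * U = Matrix.of (fun (p : Fin K × Fin m) (ℓ' : Fin m) =>
              if p.2 = ℓ' then (1 : Fq) else 0) ∧
            ∀ g : Fin K × Fin m → Fq,
              (g ᵥ* F) ᵥ* U = fun ℓ : Fin m => ∑ j : Fin K, g (j, ℓ) := by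
  classical
  refine ⟨n + 1, ?_⟩
  intro Fq _ _ hQ
  -- distinct nonzero evaluation points
  have hcard : Fintype.card (Fin n) ≤ Fintype.card Fqˣ := by
    rw [Fintype.card_units, Fintype.card_fin]; omega
  obtain ⟨e⟩ := Function.Embedding.nonempty_of_card_le hcard
  set α : Fin n → Fq := fun i => (e i : Fq) with hα
  have hαinj : Function.Injective α := fun a b h => e.injective (Units.ext h)
  have hα0 : ∀ i, α i ≠ 0 := fun i => (e i).ne_zero
  -- the sets of workers holding block j
  set T : Fin K → Finset (Fin n) := fun j => Finset.univ.filter (fun i => j ∈ Z i) with hT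
  have hTcard : ∀ j, τs + m ≤ (T j).card := hZ
  have hTle : ∀ j, (T j).card ≤ n := fun j => by
    simpa using Finset.card_le_univ (T j)
  have hnτ : τs + m ≤ n := le_trans (hTcard ⟨0, hK⟩) (hTle ⟨0, hK⟩)
  -- the vanishing polynomials
  set v : Fin K → Fq[X] := fun j => ∏ i ∈ (T j)ᶜ, (X - C (α i)) with hv
  have hv0 : ∀ j, (v j).coeff 0 ≠ 0 := by
    intro j
    rw [coeff_zero_eq_eval_zero, hv, eval_prod, Finset.prod_ne_zero_iff]
    intro i _
    simp only [eval_sub, eval_X, eval_C, zero_sub, neg_ne_zero]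
    exact hα0 i
  -- the encoding polynomials
  set f : Fin K → Fin m → Fq[X] := fun j ℓ =>
    v j * PowerSeries.trunc m ((PowerSeries.X : PowerSeries Fq) ^ (ℓ : ℕ) *
      (↑(v j) : PowerSeries Fq)⁻¹) with hf
  -- low coefficients of f j ℓ
  have hcoeff : ∀ (j : Fin K) (ℓ ℓ' : Fin m),
      (f j ℓ).coeff (ℓ' : ℕ) = if ℓ = ℓ' then 1 else 0 := by
    intro j ℓ ℓ'
    rw [hf]
    rw [coeff_mul_trunc_inv (v j) (hv0 j) m ℓ ℓ' ℓ'.isLt]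
    exact if_congr (by simp [Fin.ext_iff]) rfl rfl
  -- degree bound
  have hnat : ∀ (j : Fin K) (ℓ : Fin m), (f j ℓ).natDegree < n - τs := by
    intro j ℓ
    have hdv : (v j).natDegree = (T j)ᶜ.card := by
      rw [hv]
      rw [Polynomial.natDegree_prod_of_monic _ _ (fun i _ => monic_X_sub_C (α i))]
      simp [natDegree_X_sub_C]
    have hdr : (PowerSeries.trunc m ((PowerSeries.X : PowerSeries Fq) ^ (ℓ : ℕ) *
        (↑(v j) : PowerSeries Fq)⁻¹)).natDegree < m := by
      have h := PowerSeries.natDegree_trunc_lt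
        ((PowerSeries.X : PowerSeries Fq) ^ (ℓ : ℕ) * (↑(v j) : PowerSeries Fq)⁻¹) (m - 1)
      rwa [Nat.sub_add_cancel hm] at h
    have hmul := Polynomial.natDegree_mul_le (p := v j)
      (q := PowerSeries.trunc m ((PowerSeries.X : PowerSeries Fq) ^ (ℓ : ℕ) *
        (↑(v j) : PowerSeries Fq)⁻¹))
    rw [hdv, Finset.card_compl, Fintype.card_fin] at hmul
    have h1 := hTcard j
    have h2 := hTle j
    simp only [hf]
    omega
  -- sparsity
  have hsparse : ∀ (j : Fin K) (ℓ : Fin m) (i : Fin n), j ∉ Z i →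
      (f j ℓ).eval (α i) = 0 := by
    intro j ℓ i hij
    have hic : i ∈ (T j)ᶜ := by
      simp [hT, Finset.mem_compl, hij]
    rw [hf, eval_mul, hv, eval_prod, Finset.prod_eq_zero hic (by simp)]
    ring
  refine ⟨Matrix.of fun p i => (f p.1 p.2).eval (α i), fun j ℓ i hij => hsparse j ℓ i hij, ?_⟩
  intro S hS
  have hinjS : Set.InjOn α S := hαinj.injOn
  have hdegS : ∀ (j : Fin K) (ℓ : Fin m), (f j ℓ).degree < (S.card : WithBot ℕ) := by
    intro j ℓ
    refine lt_of_le_of_lt Polynomial.degree_le_natDegree ?_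
    rw [hS]
    exact_mod_cast hnat j ℓ
  -- decoding matrix: coefficient extraction by Lagrange interpolation
  set U : Matrix (Fin n) (Fin m) Fq :=
    Matrix.of fun i ℓ' => if i ∈ S then (Lagrange.basis S α i).coeff (ℓ' : ℕ) else 0 with hU
  have hkey : ∀ (j : Fin K) (ℓ ℓ' : Fin m),
      ∑ i ∈ S, (f j ℓ).eval (α i) * (Lagrange.basis S α i).coeff (ℓ' : ℕ)
        = (f j ℓ).coeff (ℓ' : ℕ) := by
    intro j ℓ ℓ'
    have hinterp := Lagrange.eq_interpolate (f := f j ℓ) hinjS (hdegS j ℓ)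
    have hc := congrArg (fun p : Fq[X] => p.coeff (ℓ' : ℕ)) hinterp
    simp only [Lagrange.interpolate_apply, Polynomial.finset_sum_coeff,
      Polynomial.coeff_C_mul] at hc
    exact hc.symm
  have hFU : (Matrix.of fun p i => (f p.1 p.2).eval (α i)) * U =
      Matrix.of (fun (p : Fin K × Fin m) (ℓ' : Fin m) =>
        if p.2 = ℓ' then (1 : Fq) else 0) := by
    ext ⟨j, ℓ⟩ ℓ'
    rw [Matrix.mul_apply]
    have hterm : ∀ i : Fin n,
        (Matrix.of fun p i => (f p.1 p.2).eval (α i)) (j, ℓ) i * U i ℓ'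
        = if i ∈ S then (f j ℓ).eval (α i) * (Lagrange.basis S α i).coeff (ℓ' : ℕ)
          else 0 := by
      intro i
      by_cases h : i ∈ S <;> simp [hU, h]
    rw [Finset.sum_congr rfl fun i _ => hterm i, Finset.sum_ite_mem, Finset.univ_inter,
      hkey j ℓ ℓ', hcoeff j ℓ ℓ']
    simp
  refine ⟨U, fun i hi ℓ => by simp [hU, hi], hFU, ?_⟩
  intro g
  rw [Matrix.vecMul_vecMul, hFU]
  funext ℓ
  simp only [Matrix.vecMul, dotProduct, Matrix.of_apply, mul_ite, mul_one, mul_zero]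
  rw [Fintype.sum_prod_type]
  refine Finset.sum_congr rfl fun j _ => ?_
  simp
end

section
/- Let F_q be a finite field and K, m, n, τ_s positive integers with τ_s < n. Let F ∈ F_q^{(Km)×n} be a matrix, with rows indexed by pairs (j,ℓ) ∈ {1,…,K}×{1,…,m}. Suppose that for every g ∈ F_q^{Km} with block-sum Σ_{j=1}^K g_j ≠ 0 one has wt_H(gF) ≥ τ_s + 1. Then for every subset S ⊆ {1,…,n} with |S| = n − τ_s there exists a matrix U ∈ F_q^{n×m} whose rows indexed outside S are zero such that F·U = 1_K ⊗ I_m; hence for every g ∈ F_q^{Km} the block-sum Σ_{j=1}^K g_j equals (gF)·U and is determined by the coordinates of gF indexed by S. -/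
open Matrix

/-- Reduction from a linear network computing code for the sum function with
minimum distance at least `τ_s + 1` to a gradient coding scheme tolerating
`τ_s` stragglers: if `wt_H(gF) ≥ τ_s + 1` whenever the block-sum of `g` is
nonzero, then from the coordinates of `gF` indexed by any set `S` of
`n - τ_s` workers one can linearly recover the block-sum of `g`. -/
theorem gradient_coding_from_min_distance
    {Fq : Type*} [Field Fq] [Fintype Fq] [DecidableEq Fq]
    (K m n τs : ℕ) (hK : 0 < K) (hm : 0 < m) (hn : 0 < n) (hτs : 0 < τs) (hτn : τs < n)
    (F : Matrix (Fin K × Fin m) (Fin n) Fq)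
    (hdist : ∀ g : Fin K × Fin m → Fq,
      (fun ℓ : Fin m => ∑ j : Fin K, g (j, ℓ)) ≠ 0 →
      τs + 1 ≤ hammingNorm (g ᵥ* F)) :
    ∀ S : Finset (Fin n), S.card = n - τs →
      ∃ U : Matrix (Fin n) (Fin m) Fq,
        (∀ i ∉ S, ∀ ℓ : Fin m, U i ℓ = 0) ∧
        F * U = Matrix.of (fun (p : Fin K × Fin m) (ℓ' : Fin m) =>
          if p.2 = ℓ' then (1 : Fq) else 0) ∧
        ∀ g : Fin K × Fin m → Fq,
          (g ᵥ* F) ᵥ* U = fun ℓ : Fin m => ∑ j : Fin K, g (j, ℓ) := by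
  intro S hS
  -- key vanishing claim
  have key : ∀ g : Fin K × Fin m → Fq, (∀ i ∈ S, (g ᵥ* F) i = 0) →
      ∀ ℓ : Fin m, ∑ j : Fin K, g (j, ℓ) = 0 := by
    intro g hg
    by_contra hne
    push_neg at hne
    obtain ⟨ℓ, hℓ⟩ := hne
    have hnz : (fun ℓ : Fin m => ∑ j : Fin K, g (j, ℓ)) ≠ 0 := by
      intro h; exact hℓ (congrFun h ℓ)
    have h1 := hdist g hnz
    have h2 : hammingNorm (g ᵥ* F) ≤ τs := by
      have hsub : ({i | (g ᵥ* F) i ≠ 0} : Finset (Fin n)) ⊆ Sᶜ := by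
        intro i hi
        simp only [Finset.mem_filter] at hi
        simp only [Finset.mem_compl]
        intro hiS
        exact hi.2 (hg i hiS)
      calc hammingNorm (g ᵥ* F) ≤ Sᶜ.card := Finset.card_le_card hsub
        _ = n - S.card := by simp [Finset.card_compl]
        _ = τs := by omega
    omega
  -- mask linear map
  classical
  let mask : (Fin n → Fq) →ₗ[Fq] (Fin n → Fq) :=
    { toFun := fun u i => if i ∈ S then u i else 0
      map_add' := by intro u v; funext i; by_cases h : i ∈ S <;> simp [h]
      map_smul' := by intro c u; funext i; by_cases h : i ∈ S <;> simp [h] }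
  let T : (Fin n → Fq) →ₗ[Fq] (Fin K × Fin m → Fq) := F.mulVecLin.comp mask
  have hrange : ∀ ℓ : Fin m,
      (fun p : Fin K × Fin m => if p.2 = ℓ then (1 : Fq) else 0) ∈ LinearMap.range T := by
    intro ℓ
    by_contra hb
    obtain ⟨f, hf0, hfbot⟩ :=
      (LinearMap.range T).exists_dual_map_eq_bot_of_notMem hb inferInstance
    set g : Fin K × Fin m → Fq := fun p => f (Pi.single p 1) with hgdef
    have hfg : ∀ w : Fin K × Fin m → Fq, f w = ∑ p, w p * g p := by
      intro w
      have : w = ∑ p, w p • (Pi.single p (1:Fq) : Fin K × Fin m → Fq) := by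
        funext q; simp [Finset.sum_apply, Pi.single_apply, Pi.smul_apply]
      conv_lhs => rw [this, map_sum]
      simp only [_root_.map_smul, smul_eq_mul]; rfl
    have hker : ∀ i ∈ S, (g ᵥ* F) i = 0 := by
      intro i hi
      have hmem : T (Pi.single i 1) ∈ LinearMap.range T := ⟨_, rfl⟩
      have : f (T (Pi.single i 1)) = 0 := by
        have := hfbot ▸ Submodule.mem_map_of_mem (f := f) hmem
        exact (Submodule.mem_bot Fq).mp this
      rw [hfg] at this
      have hTe : ∀ p, T (Pi.single i 1) p = F p i := by
        intro p
        simp only [T, LinearMap.comp_apply, mulVecLin_apply, mulVec, dotProduct]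
        have : (mask (Pi.single i 1)) = Pi.single i 1 := by
          funext j
          simp only [mask, LinearMap.coe_mk, AddHom.coe_mk]
          by_cases hj : j ∈ S
          · simp [hj]
          · have : j ≠ i := by rintro rfl; exact hj hi
            simp [hj, Pi.single_apply, this]
        rw [this]
        simp [mulVec, dotProduct, Pi.single_apply, mul_comm]
      calc (g ᵥ* F) i = ∑ p, g p * F p i := by
            simp [vecMul, dotProduct]
        _ = ∑ p, T (Pi.single i 1) p * g p := by
            refine Finset.sum_congr rfl fun p _ => ?_; rw [hTe p, mul_comm]
        _ = 0 := this
    have := key g hker ℓ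
    apply hf0
    rw [hfg]
    calc (∑ p : Fin K × Fin m, (if p.2 = ℓ then (1:Fq) else 0) * g p)
        = ∑ j : Fin K, ∑ ℓ' : Fin m, (if ℓ' = ℓ then (1:Fq) else 0) * g (j, ℓ') := by
          rw [Fintype.sum_prod_type]
      _ = ∑ j : Fin K, g (j, ℓ) := by
          refine Finset.sum_congr rfl fun j _ => ?_
          simp [Finset.sum_ite_eq', mul_comm]
      _ = 0 := this
  choose u hu using hrange
  let U : Matrix (Fin n) (Fin m) Fq := Matrix.of fun i ℓ => mask (u ℓ) i
  have hFU : F * U = Matrix.of (fun (p : Fin K × Fin m) (ℓ' : Fin m) =>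
      if p.2 = ℓ' then (1 : Fq) else 0) := by
    ext p ℓ
    have := congrFun (hu ℓ) p
    simpa [U, Matrix.mul_apply, T, mulVec, dotProduct, Matrix.of_apply] using this
  refine ⟨U, ?_, hFU, ?_⟩
  · intro i hi ℓ
    simp [U, mask, hi]
  · intro g
    funext ℓ
    rw [Matrix.vecMul_vecMul, hFU]
    calc (g ᵥ* Matrix.of (fun (p : Fin K × Fin m) (ℓ' : Fin m) =>
            if p.2 = ℓ' then (1 : Fq) else 0)) ℓ
        = ∑ p : Fin K × Fin m, g p * (if p.2 = ℓ then (1:Fq) else 0) := by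
          simp [vecMul, dotProduct]
      _ = ∑ j : Fin K, ∑ ℓ' : Fin m, g (j, ℓ') * (if ℓ' = ℓ then (1:Fq) else 0) := by
          rw [Fintype.sum_prod_type]
      _ = ∑ j : Fin K, g (j, ℓ) := by
          refine Finset.sum_congr rfl fun j _ => ?_
          simp [Finset.sum_ite_eq', mul_comm]
end
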